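/- Let n ≥ 2 be even and set V = 2^{n/2}. The polynomial H(x) = (x^2 - V^2)((x-2)^2 - V^2) is nonnegative at every even integer x. Consequently, for any Boolean function f : F_2^n → F_2 with f(0) = 0, using Σ_a W_f(a) = 2^n and Σ_a W_f(a)^2 = 2^{2n}, one has Σ_{a ∈ F_2^n} (W_f(a)^4 - 4 W_f(a)^3) ≥ 2^{3n} - 4·2^{2n}. -/

import Mathlib

/-!
Every Walsh coefficient `W a` is even, and for even `x` and `V` the quartic
`H(x) = (x² - V²)((x - 2)² - V²)` factors as `(x + V)(x + V - 2) · (x - V)(x - V - 2)`,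
a product of two numbers of the form `m (m - 2)` with `m` even, hence nonnegative.
Summing `H(W a) ≥ 0` over `a` and substituting `V² = 2ⁿ`, `∑ W a = 2ⁿ` and Parseval's
identity `∑ W a² = 2²ⁿ` leaves exactly the bound on `∑ (W a⁴ - 4 W a³)`.
-/

open Finset

lemma Int.mul_sub_two_nonneg_of_even {m : ℤ} (hm : Even m) : 0 ≤ m * (m - 2) := by
  obtain ⟨k, rfl⟩ := hm
  rcases le_or_gt k 0 with hk | hk <;> nlinarith

lemma Int.sq_sub_sq_mul_sub_two_sq_sub_sq_nonneg {x V : ℤ} (hx : Even x) (hV : Even V) :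
    0 ≤ (x ^ 2 - V ^ 2) * ((x - 2) ^ 2 - V ^ 2) := by
  have hfactor : (x ^ 2 - V ^ 2) * ((x - 2) ^ 2 - V ^ 2) =
      ((x + V) * (x + V - 2)) * ((x - V) * (x - V - 2)) := by ring
  rw [hfactor]
  exact mul_nonneg (Int.mul_sub_two_nonneg_of_even (hx.add hV))
    (Int.mul_sub_two_nonneg_of_even (hx.sub hV))

lemma sum_pow_four_sub_four_mul_pow_three_ge {α : Type*} [Fintype α] (w : α → ℤ) (N : ℤ)
    (hcard : (Fintype.card α : ℤ) = N) (hsum : ∑ a, w a = N) (hsum_sq : ∑ a, w a ^ 2 = N ^ 2)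
    (hH : ∀ a, 0 ≤ (w a ^ 2 - N) * ((w a - 2) ^ 2 - N)) :
    N ^ 3 - 4 * N ^ 2 ≤ ∑ a, (w a ^ 4 - 4 * w a ^ 3) := by
  have hexpand : ∑ a, (w a ^ 2 - N) * ((w a - 2) ^ 2 - N) =
      ∑ a, (w a ^ 4 - 4 * w a ^ 3) + (4 - 2 * N) * ∑ a, w a ^ 2 + 4 * N * ∑ a, w a
        + Fintype.card α * (N ^ 2 - 4 * N) := by
    simp only [mul_sum, ← sum_add_distrib, ← nsmul_eq_mul, ← sum_const, ← card_univ]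
    exact sum_congr rfl fun a _ => by ring
  have hnonneg := sum_nonneg fun a (_ : a ∈ univ) => hH a
  rw [hexpand, hsum, hsum_sq, hcard] at hnonneg
  linarith

lemma ZMod.two_neg_one_pow_val_add (c d : ZMod 2) :
    (-1 : ℤ) ^ (c + d).val = (-1) ^ c.val * (-1) ^ d.val := by
  revert c d; decide

namespace Walsh

variable {ι : Type*} [Fintype ι] [DecidableEq ι]

def walsh (f : (ι → ZMod 2) → ZMod 2) (a : ι → ZMod 2) : ℤ :=
  ∑ x, (-1 : ℤ) ^ (f x + a ⬝ᵥ x).val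

lemma sum_neg_one_pow_dotProduct (x : ι → ZMod 2) :
    ∑ a : ι → ZMod 2, (-1 : ℤ) ^ (a ⬝ᵥ x).val = if x = 0 then 2 ^ Fintype.card ι else 0 := by
  split_ifs with hx
  · subst hx
    simp
  obtain ⟨i, hi⟩ : ∃ i, x i ≠ 0 := by
    by_contra! h
    exact hx (funext h)
  have hxi : x i = 1 := (Fin.exists_fin_two.mp ⟨x i, rfl⟩).resolve_left hi
  -- translating `a` by `eᵢ` flips the sign of every term
  have hflip (a : ι → ZMod 2) :
      (-1 : ℤ) ^ ((a + Pi.single i 1) ⬝ᵥ x).val = -(-1) ^ (a ⬝ᵥ x).val := by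
    rw [add_dotProduct, single_dotProduct, hxi, one_mul, ZMod.two_neg_one_pow_val_add,
      ZMod.val_one, pow_one, mul_neg_one]
  have hshift := Equiv.sum_comp (Equiv.addRight (Pi.single i 1 : ι → ZMod 2))
    fun a => (-1 : ℤ) ^ (a ⬝ᵥ x).val
  simp only [Equiv.coe_addRight, hflip, sum_neg_distrib] at hshift
  linarith

omit [Fintype ι] [DecidableEq ι] in
lemma add_eq_zero_iff_eq {x y : ι → ZMod 2} : x + y = 0 ↔ x = y := by
  rw [← sub_eq_zero (a := x), sub_eq_add_neg,
    show -y = y from funext fun i => CharTwo.neg_eq (y i)]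

lemma sum_walsh (f : (ι → ZMod 2) → ZMod 2) :
    ∑ a, walsh f a = 2 ^ Fintype.card ι * (-1) ^ (f 0).val := by
  calc ∑ a, walsh f a
      = ∑ x, (-1 : ℤ) ^ (f x).val * ∑ a : ι → ZMod 2, (-1 : ℤ) ^ (a ⬝ᵥ x).val := by
        unfold walsh
        rw [sum_comm]
        simp only [mul_sum, ZMod.two_neg_one_pow_val_add, dotProduct_comm]
    _ = 2 ^ Fintype.card ι * (-1) ^ (f 0).val := by
        simp [sum_neg_one_pow_dotProduct, mul_comm]

lemma sum_walsh_sq (f : (ι → ZMod 2) → ZMod 2) :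
    ∑ a, walsh f a ^ 2 = (2 ^ Fintype.card ι) ^ 2 := by
  have hexpand (a : ι → ZMod 2) : walsh f a ^ 2 =
      ∑ x, ∑ y, (-1 : ℤ) ^ (f x + f y).val * (-1) ^ (a ⬝ᵥ (x + y)).val := by
    rw [walsh, sq, sum_mul_sum]
    refine sum_congr rfl fun x _ => sum_congr rfl fun y _ => ?_
    simp only [dotProduct_add, ZMod.two_neg_one_pow_val_add]
    ring
  calc ∑ a, walsh f a ^ 2
      = ∑ x, ∑ y, (-1 : ℤ) ^ (f x + f y).val *
          ∑ a : ι → ZMod 2, (-1 : ℤ) ^ (a ⬝ᵥ (x + y)).val := by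
        simp only [hexpand, mul_sum]
        rw [sum_comm]
        exact sum_congr rfl fun x _ => sum_comm
    _ = ∑ x : ι → ZMod 2, (2 : ℤ) ^ Fintype.card ι := by
        simp only [sum_neg_one_pow_dotProduct, add_eq_zero_iff_eq, mul_ite, mul_zero,
          sum_ite_eq, mem_univ, if_true, CharTwo.add_self_eq_zero, ZMod.val_zero, pow_zero,
          one_mul]
    _ = (2 ^ Fintype.card ι) ^ 2 := by
        simp [sq]

lemma even_walsh [Nonempty ι] (f : (ι → ZMod 2) → ZMod 2) (a : ι → ZMod 2) :
    Even (walsh f a) := by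
  refine even_iff_two_dvd.mpr ((ZMod.intCast_zmod_eq_zero_iff_dvd _ 2).mp ?_)
  -- every term is `±1 ≡ 1 (mod 2)`, and there are `2 ^ |ι|` of them
  simp [walsh, Fintype.card_ne_zero, show (2 : ZMod 2) = 0 from rfl]

end Walsh

open Walsh in
theorem stmt_13 (n : ℕ) (hn : 2 ≤ n) (hne : Even n) (V : ℤ) (hV : V = 2 ^ (n / 2)) :
    (∀ x : ℤ, Even x → 0 ≤ (x ^ 2 - V ^ 2) * ((x - 2) ^ 2 - V ^ 2)) ∧
    (∀ f : (Fin n → ZMod 2) → ZMod 2, f 0 = 0 →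
      ∀ W : (Fin n → ZMod 2) → ℤ,
        (∀ a, W a = ∑ x : Fin n → ZMod 2,
          (-1 : ℤ) ^ (f x + dotProduct a x).val) →
        2 ^ (3 * n) - 4 * 2 ^ (2 * n) ≤
          ∑ a : Fin n → ZMod 2, ((W a) ^ 4 - 4 * (W a) ^ 3)) := by
  have hV_even : Even V := by
    rw [hV]
    exact (Int.even_pow' (by omega)).mpr even_two
  have hV_sq : V ^ 2 = 2 ^ n := by
    rw [hV, ← pow_mul, Nat.div_mul_cancel hne.two_dvd]
  have hH (x : ℤ) (hx : Even x) := Int.sq_sub_sq_mul_sub_two_sq_sub_sq_nonneg hx hV_even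
  refine ⟨hH, fun f hf W hW => ?_⟩
  obtain rfl : W = walsh f := funext hW
  have : Nonempty (Fin n) := ⟨⟨0, by omega⟩⟩
  have hbound := sum_pow_four_sub_four_mul_pow_three_ge (walsh f) (2 ^ n)
    (by simp) (by simp [sum_walsh, hf])
    (by simpa using sum_walsh_sq f) fun a => hV_sq ▸ hH _ (even_walsh f a)
  rwa [pow_mul', pow_mul']
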